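/- Let V and W be cyclically reduced words. The sign function s_{V,W} : I(V,W) → {−1, 0, 1} is constant on each equivalence class of R(V,W); that is, if (i,j) and (k,h) are R(V,W)-equivalent then s_{V,W}(i,j) = s_{V,W}(k,h). -/
import Mathlib


namespace GoldmanPaper

variable {α : Type*} [Inhabited α]

/-- The letter of `V` at index `i`, indices taken modulo the length of `V`. -/
def letterZ (V : List α) (i : ZMod V.length) : α := V.getD i.val default

/-- The cyclic rotation `V_i` for an index `i` mod the length of `V`. -/
def rotZ (V : List α) (i : ZMod V.length) : List α := V.rotate i.val

/-- The cyclic rotation `V_j` for an integer `j` (taken mod the length of `V`). -/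
def rot (V : List α) (j : ℤ) : List α := V.rotate ((j % (V.length : ℤ)).toNat)

/-- `V^k`: the concatenation of `k` copies of `V`. -/
def wpow (V : List α) (k : ℕ) : List α := (List.replicate k V).flatten

/-- A word is primitive if it is not of the form `W^r` with `r ≥ 2`. -/
def Primitive (V : List α) : Prop := ¬ ∃ (W : List α) (r : ℕ), 2 ≤ r ∧ V = wpow W r

/-- `V` is freely reduced: `v_{i+1} ≠ bar v_i` for all `i`. -/
def FreelyReduced (bar : α → α) (V : List α) : Prop :=
  ∀ i : ℕ, i + 1 < V.length → V.getD (i + 1) default ≠ bar (V.getD i default)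

/-- `V` is cyclically reduced: nonempty, freely reduced, and `v_0 ≠ bar v_{n-1}`. -/
def CyclicallyReduced (bar : α → α) (V : List α) : Prop :=
  V ≠ [] ∧ FreelyReduced bar V ∧ V.getD 0 default ≠ bar (V.getD (V.length - 1) default)

/-- The generating step of the equivalence relation `R(V,W)` on `I(V,W)`:
rule 1 relates `(j,k)` with `(j+1,k+1)` whenever `v_j = w_k`; rule 2 relates
`(j+1,k)` with `(j,k+1)` whenever `v_j = bar w_k`. -/
def Step (bar : α → α) (V W : List α) :
    ZMod V.length × ZMod W.length → ZMod V.length × ZMod W.length → Prop :=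
  fun p q =>
    (q = (p.1 + 1, p.2 + 1) ∧ letterZ V p.1 = letterZ W p.2) ∨
    (q = (p.1 - 1, p.2 + 1) ∧ letterZ V (p.1 - 1) = bar (letterZ W p.2))

/-- The equivalence relation `R(V,W)` generated by rules 1 and 2. -/
def REq (bar : α → α) (V W : List α) :
    ZMod V.length × ZMod W.length → ZMod V.length × ZMod W.length → Prop :=
  Relation.EqvGen (Step bar V W)

/-- A pair `(i,j) ∈ I(V,W)` is extremal if `v_i ≠ w_j` and `v_i ≠ bar w_{j-1}`. -/
def Extremal (bar : α → α) (V W : List α) (p : ZMod V.length × ZMod W.length) : Prop :=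
  letterZ V p.1 ≠ letterZ W p.2 ∧ letterZ V p.1 ≠ bar (letterZ W (p.2 - 1))

section Order

variable [LinearOrder α]

/-- The order on `α` cyclically rotated so that `x` is the smallest element. -/
def cycLT (x a b : α) : Prop :=
  if (x ≤ a ∧ x ≤ b) ∨ (a < x ∧ b < x) then a < b else x ≤ a ∧ b < x

/-- The order on half-infinite words. -/
def hwLT (bar : α → α) (T U : ℕ → α) : Prop :=
  T 0 < U 0 ∨ ∃ j : ℕ, (∀ i ≤ j, T i = U i) ∧ cycLT (bar (T j)) (T (j + 1)) (U (j + 1))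

/-- A 4-tuple is linearly ordered: strictly increasing or strictly decreasing. -/
def LinOrd4 {β : Type*} (lt : β → β → Prop) (a b c d : β) : Prop :=
  (lt a b ∧ lt b c ∧ lt c d) ∨ (lt d c ∧ lt c b ∧ lt b a)

/-- A 4-tuple is cyclically ordered: some cyclic permutation is linearly ordered. -/
def CycOrd4 {β : Type*} (lt : β → β → Prop) (a b c d : β) : Prop :=
  LinOrd4 lt a b c d ∨ LinOrd4 lt b c d a ∨ LinOrd4 lt c d a b ∨ LinOrd4 lt d a b c

/-- The half-infinite word `V_i^∞`. -/
def fwd (V : List α) (i : ZMod V.length) : ℕ → α :=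
  fun t => letterZ V (i + (t : ZMod V.length))

/-- The half-infinite word `V_i^{-∞} = (bar V_i)^∞`. -/
def bwd (bar : α → α) (V : List α) (i : ZMod V.length) : ℕ → α :=
  fun t => bar (letterZ V (i - 1 - (t : ZMod V.length)))

open scoped Classical in
/-- The sign `s_{V,W}(i,j) ∈ {-1,0,1}`. -/
noncomputable def sgn (bar : α → α) (V W : List α)
    (i : ZMod V.length) (j : ZMod W.length) : ℤ :=
  if CycOrd4 (hwLT bar) (fwd V i) (fwd W j) (bwd bar V i) (bwd bar W j) then 1
  else if CycOrd4 (hwLT bar) (fwd V i) (bwd bar W j) (bwd bar V i) (fwd W j) then -1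
  else 0

end Order

/-- The involution `bar` on the alphabet `S × Bool`. -/
def pbar {S : Type*} : S × Bool → S × Bool := fun p => (p.1, !p.2)


section Aux
variable [LinearOrder α] {bar : α → α}

theorem cycLT_of_le_le {x a b : α} (h1 : x ≤ a) (h2 : x ≤ b) : cycLT x a b ↔ a < b := by
  unfold cycLT; rw [if_pos (Or.inl ⟨h1, h2⟩)]
theorem cycLT_of_lt_lt {x a b : α} (h1 : a < x) (h2 : b < x) : cycLT x a b ↔ a < b := by
  unfold cycLT; rw [if_pos (Or.inr ⟨h1, h2⟩)]
theorem cycLT_of_le_lt {x a b : α} (h1 : x ≤ a) (h2 : b < x) : cycLT x a b := by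
  unfold cycLT
  rw [if_neg]
  · exact ⟨h1, h2⟩
  · rintro (⟨_, hb⟩ | ⟨ha, _⟩)
    · exact absurd (lt_of_lt_of_le h2 hb) (lt_irrefl _)
    · exact absurd (lt_of_lt_of_le ha h1) (lt_irrefl _)
theorem not_cycLT_of_lt_le {x a b : α} (h1 : a < x) (h2 : x ≤ b) : ¬ cycLT x a b := by
  unfold cycLT
  rw [if_neg]
  · rintro ⟨ha, _⟩; exact absurd (lt_of_lt_of_le h1 ha) (lt_irrefl _)
  · rintro (⟨ha, _⟩ | ⟨_, hb⟩)
    · exact absurd (lt_of_lt_of_le h1 ha) (lt_irrefl _)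
    · exact absurd (lt_of_lt_of_le hb h2) (lt_irrefl _)
theorem cycLT_irrefl (x a : α) : ¬ cycLT x a a := by
  rcases le_or_gt x a with h | h
  · rw [cycLT_of_le_le h h]; exact lt_irrefl a
  · rw [cycLT_of_lt_lt h h]; exact lt_irrefl a
theorem cycLT_trans {x a b c : α} (h1 : cycLT x a b) (h2 : cycLT x b c) : cycLT x a c := by
  rcases le_or_gt x a with ha | ha <;> rcases le_or_gt x b with hb | hb <;>
    rcases le_or_gt x c with hc | hc
  · rw [cycLT_of_le_le ha hb] at h1; rw [cycLT_of_le_le hb hc] at h2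
    rw [cycLT_of_le_le ha hc]; exact lt_trans h1 h2
  · exact cycLT_of_le_lt ha hc
  · exact absurd h2 (not_cycLT_of_lt_le hb hc)
  · exact cycLT_of_le_lt ha hc
  · exact absurd h1 (not_cycLT_of_lt_le ha hb)
  · exact absurd h1 (not_cycLT_of_lt_le ha hb)
  · exact absurd h2 (not_cycLT_of_lt_le hb hc)
  · rw [cycLT_of_lt_lt ha hb] at h1; rw [cycLT_of_lt_lt hb hc] at h2
    rw [cycLT_of_lt_lt ha hc]; exact lt_trans h1 h2
theorem cycLT_asymm {x a b : α} (h1 : cycLT x a b) (h2 : cycLT x b a) : False :=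
  cycLT_irrefl x a (cycLT_trans h1 h2)
theorem cycLT_total {x a b : α} (h : a ≠ b) : cycLT x a b ∨ cycLT x b a := by
  rcases le_or_gt x a with ha | ha <;> rcases le_or_gt x b with hb | hb
  · rw [cycLT_of_le_le ha hb, cycLT_of_le_le hb ha]; exact h.lt_or_gt
  · exact Or.inl (cycLT_of_le_lt ha hb)
  · exact Or.inr (cycLT_of_le_lt hb ha)
  · rw [cycLT_of_lt_lt ha hb, cycLT_of_lt_lt hb ha]; exact h.lt_or_gt

/-- the order with base point `y` -/
def hwAt (bar : α → α) (y : α) (T U : ℕ → α) : Prop :=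
  cycLT y (T 0) (U 0) ∨ ∃ j : ℕ, (∀ i ≤ j, T i = U i) ∧ cycLT (bar (T j)) (T (j + 1)) (U (j + 1))

def tl (T : ℕ → α) : ℕ → α := fun n => T (n + 1)
def cns (a : α) (T : ℕ → α) : ℕ → α := fun n => Nat.casesOn n a T

variable {bar : α → α}

theorem hwLT_irrefl (T : ℕ → α) : ¬ hwLT bar T T := by
  rintro (h | ⟨j, _, h⟩)
  · exact lt_irrefl _ h
  · exact cycLT_irrefl _ _ h

theorem hwLT_head_ne {T U : ℕ → α} (h : T 0 ≠ U 0) : hwLT bar T U ↔ T 0 < U 0 := by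
  constructor
  · rintro (h1 | ⟨j, hag, _⟩)
    · exact h1
    · exact absurd (hag 0 (Nat.zero_le j)) h
  · exact Or.inl

theorem hwAt_head_ne {y : α} {T U : ℕ → α} (h : T 0 ≠ U 0) :
    hwAt bar y T U ↔ cycLT y (T 0) (U 0) := by
  constructor
  · rintro (h1 | ⟨j, hag, _⟩)
    · exact h1
    · exact absurd (hag 0 (Nat.zero_le j)) h
  · exact Or.inl

theorem hwAt_head_eq {y : α} {T U : ℕ → α} (h : T 0 = U 0) :
    hwAt bar y T U ↔ hwLT bar T U := by
  unfold hwAt hwLT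
  rw [h]
  simp [cycLT_irrefl, lt_irrefl]

/-- stripping a common first letter -/
theorem hwLT_strip {T U : ℕ → α} (h : T 0 = U 0) :
    hwLT bar T U ↔ hwAt bar (bar (T 0)) (tl T) (tl U) := by
  unfold hwLT hwAt tl
  constructor
  · rintro (h1 | ⟨j, hag, hc⟩)
    · rw [h] at h1; exact absurd h1 (lt_irrefl _)
    · cases j with
      | zero => exact Or.inl hc
      | succ k =>
        exact Or.inr ⟨k, fun i hi => hag (i + 1) (Nat.succ_le_succ hi), hc⟩
  · rintro (h1 | ⟨j, hag, hc⟩)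
    · exact Or.inr ⟨0, fun i hi => by cases Nat.le_zero.mp hi; exact h, h1⟩
    · refine Or.inr ⟨j + 1, fun i hi => ?_, hc⟩
      cases i with
      | zero => exact h
      | succ m => exact hag m (Nat.le_of_succ_le_succ hi)

theorem hwLT_trans {T U V : ℕ → α} (h1 : hwLT bar T U) (h2 : hwLT bar U V) :
    hwLT bar T V := by
  rcases h1 with h1 | ⟨j1, hag1, hc1⟩
  · rcases h2 with h2 | ⟨j2, hag2, hc2⟩
    · exact Or.inl (lt_trans h1 h2)
    · exact Or.inl ((hag2 0 (Nat.zero_le _)) ▸ h1)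
  · rcases h2 with h2 | ⟨j2, hag2, hc2⟩
    · refine Or.inl ?_
      rw [hag1 0 (Nat.zero_le _)]
      exact h2
    · rcases lt_trichotomy j1 j2 with hj | hj | hj
      · refine Or.inr ⟨j1, fun i hi =>
          (hag1 i hi).trans (hag2 i (le_of_lt (lt_of_le_of_lt hi hj))), ?_⟩
        rw [← hag2 (j1 + 1) (Nat.succ_le_of_lt hj)]
        exact hc1
      · subst hj
        refine Or.inr ⟨j1, fun i hi => (hag1 i hi).trans (hag2 i hi), ?_⟩
        have hb : bar (T j1) = bar (U j1) := by rw [hag1 j1 le_rfl]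
        rw [hb]
        exact cycLT_trans (hb ▸ hc1) hc2
      · refine Or.inr ⟨j2, fun i hi =>
          (hag1 i (le_of_lt (lt_of_le_of_lt hi hj))).trans (hag2 i hi), ?_⟩
        have hb : bar (T j2) = bar (U j2) := by rw [hag1 j2 (le_of_lt hj)]
        rw [hb, hag1 (j2 + 1) (Nat.succ_le_of_lt hj)]
        exact hc2

theorem hwLT_asymm {T U : ℕ → α} (h1 : hwLT bar T U) (h2 : hwLT bar U T) : False := by
  rcases h1 with h1 | ⟨j1, hag1, hc1⟩
  · rcases h2 with h2 | ⟨j2, hag2, hc2⟩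
    · exact lt_asymm h1 h2
    · exact absurd (hag2 0 (Nat.zero_le _)).symm (ne_of_lt h1)
  · rcases h2 with h2 | ⟨j2, hag2, hc2⟩
    · exact absurd (hag1 0 (Nat.zero_le _)).symm (ne_of_lt h2)
    · rcases lt_trichotomy j1 j2 with hj | hj | hj
      · have he := (hag2 (j1 + 1) (Nat.succ_le_of_lt hj)).symm
        exact cycLT_irrefl _ _ (by rw [he] at hc1; exact hc1)
      · subst hj
        have hb : bar (T j1) = bar (U j1) := by rw [hag1 j1 le_rfl]
        exact cycLT_asymm (hb ▸ hc1) hc2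
      · have he := (hag1 (j2 + 1) (Nat.succ_le_of_lt hj))
        exact cycLT_irrefl _ _ (by rw [he] at hc2; exact hc2)

theorem hwLT_total {T U : ℕ → α} (h : T ≠ U) : hwLT bar T U ∨ hwLT bar U T := by
  have hex : ∃ n, T n ≠ U n := by
    by_contra hc
    push_neg at hc
    exact h (funext hc)
  classical
  obtain ⟨j, hne, hag⟩ : ∃ j, T j ≠ U j ∧ ∀ i < j, T i = U i :=
    ⟨Nat.find hex, Nat.find_spec hex, fun i hi => by
      by_contra hc
      exact absurd (Nat.find_le hc) (Nat.not_le.mpr hi)⟩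
  cases j with
  | zero =>
    rcases hne.lt_or_gt with hl | hl
    · exact Or.inl (Or.inl hl)
    · exact Or.inr (Or.inl hl)
  | succ k =>
    have hagk : ∀ i ≤ k, T i = U i := fun i hi => hag i (by omega)
    rcases cycLT_total (x := bar (T k)) hne with hl | hl
    · exact Or.inl (Or.inr ⟨k, hagk, hl⟩)
    · refine Or.inr (Or.inr ⟨k, fun i hi => (hagk i hi).symm, ?_⟩)
      rw [← hagk k le_rfl]
      exact hl

def c3 {β : Type*} (lt : β → β → Prop) (a b c : β) : Prop :=
  (lt a b ∧ lt b c) ∨ (lt b c ∧ lt c a) ∨ (lt c a ∧ lt a b)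

theorem c3_rot {β : Type*} {lt : β → β → Prop} {a b c : β} :
    c3 lt a b c ↔ c3 lt b c a := by unfold c3; tauto

theorem cycLT_iff_c3 {y b c : α} (hb : b ≠ y) (hc : c ≠ y) :
    cycLT y b c ↔ (y < b ∧ b < c) ∨ (b < c ∧ c < y) ∨ (c < y ∧ y < b) := by
  rcases hb.lt_or_gt with hb' | hb' <;> rcases hc.lt_or_gt with hc' | hc'
  · rw [cycLT_of_lt_lt hb' hc']
    have h1 : ¬ y < b := lt_asymm hb'
    tauto
  · have h1 := not_cycLT_of_lt_le hb' hc'.le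
    have h2 : ¬ c < y := lt_asymm hc'
    have h3 : ¬ y < b := lt_asymm hb'
    tauto
  · have h1 := cycLT_of_le_lt hb'.le hc'
    tauto
  · rw [cycLT_of_le_le hb'.le hc'.le]
    have h2 : ¬ c < y := lt_asymm hc'
    tauto

theorem c3_cycLT (y a b c : α) : c3 (cycLT y) a b c ↔ c3 (· < ·) a b c := by
  unfold c3
  simp only []
  rcases le_or_gt y a with ha | ha <;> rcases le_or_gt y b with hb | hb <;>
    rcases le_or_gt y c with hc | hc
  · rw [cycLT_of_le_le ha hb, cycLT_of_le_le hb hc, cycLT_of_le_le hc ha]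
  · rw [cycLT_of_le_le ha hb]
    have h1 := cycLT_of_le_lt hb hc
    have h2 := not_cycLT_of_lt_le hc ha
    have h3 : c < a := lt_of_lt_of_le hc ha
    have h4 : c < b := lt_of_lt_of_le hc hb
    have h5 : ¬ b < c := lt_asymm h4
    have h6 : ¬ a < c := lt_asymm h3
    tauto
  · rw [cycLT_of_le_le hc ha]
    have h1 := cycLT_of_le_lt ha hb
    have h2 := not_cycLT_of_lt_le hb hc
    have h3 : b < a := lt_of_lt_of_le hb ha
    have h4 : b < c := lt_of_lt_of_le hb hc
    have h5 : ¬ a < b := lt_asymm h3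
    have h6 : ¬ c < b := lt_asymm h4
    tauto
  · rw [cycLT_of_lt_lt hb hc]
    have h1 := cycLT_of_le_lt ha hb
    have h2 := not_cycLT_of_lt_le hc ha
    have h3 : b < a := lt_of_lt_of_le hb ha
    have h4 : c < a := lt_of_lt_of_le hc ha
    have h5 : ¬ a < b := lt_asymm h3
    have h6 : ¬ a < c := lt_asymm h4
    tauto
  · rw [cycLT_of_le_le hb hc]
    have h1 := not_cycLT_of_lt_le ha hb
    have h2 := cycLT_of_le_lt hc ha
    have h3 : a < b := lt_of_lt_of_le ha hb
    have h4 : a < c := lt_of_lt_of_le ha hc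
    have h5 : ¬ b < a := lt_asymm h3
    have h6 : ¬ c < a := lt_asymm h4
    tauto
  · rw [cycLT_of_lt_lt hc ha]
    have h1 := not_cycLT_of_lt_le ha hb
    have h2 := cycLT_of_le_lt hb hc
    have h3 : a < b := lt_of_lt_of_le ha hb
    have h4 : c < b := lt_of_lt_of_le hc hb
    have h5 : ¬ b < a := lt_asymm h3
    have h6 : ¬ b < c := lt_asymm h4
    tauto
  · rw [cycLT_of_lt_lt ha hb]
    have h1 := not_cycLT_of_lt_le hb hc
    have h2 := cycLT_of_le_lt hc ha
    have h3 : a < c := lt_of_lt_of_le ha hc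
    have h4 : b < c := lt_of_lt_of_le hb hc
    have h5 : ¬ c < a := lt_asymm h3
    have h6 : ¬ c < b := lt_asymm h4
    tauto
  · rw [cycLT_of_lt_lt ha hb, cycLT_of_lt_lt hb hc, cycLT_of_lt_lt hc ha]

theorem lt_xor_of_eq {a b c : α} (h : a = b) (hne : b ≠ c) : c < a ↔ ¬ b < c := by
  subst h
  constructor
  · exact fun h1 h2 => lt_asymm h1 h2
  · intro h1
    rcases hne.lt_or_gt with h2 | h2
    · exact absurd h2 h1
    · exact h2

theorem cycLT_xor_of_eq {y a b c : α} (h : a = b) (hne : b ≠ c) :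
    cycLT y c a ↔ ¬ cycLT y b c := by
  subst h
  constructor
  · exact fun h1 h2 => cycLT_asymm h2 h1
  · intro h1
    rcases cycLT_total (x := y) hne with h2 | h2
    · exact absurd h2 h1
    · exact h2

theorem xor_maj {p q q' : Prop} (h : q' ↔ ¬ q) :
    ((p ∧ q) ∨ (q ∧ q') ∨ (q' ∧ p)) ↔ p := by tauto

theorem c3_hwAt_pair {y : α} {T U V : ℕ → α} (h : T 0 = U 0) (hne : T 0 ≠ V 0) :
    c3 (hwAt bar y) T U V ↔ c3 (hwLT bar) T U V := by
  have hUV : U 0 ≠ V 0 := h ▸ hne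
  have hVT : V 0 ≠ T 0 := fun e => hne e.symm
  unfold c3
  rw [hwAt_head_eq h, hwAt_head_ne hUV, hwAt_head_ne hVT,
    hwLT_head_ne hUV, hwLT_head_ne hVT]
  exact (xor_maj (cycLT_xor_of_eq (y := y) h hUV)).trans
    (xor_maj (lt_xor_of_eq h hUV)).symm

theorem c3_hwAt (y : α) (T U V : ℕ → α) :
    c3 (hwAt bar y) T U V ↔ c3 (hwLT bar) T U V := by
  by_cases h1 : T 0 = U 0
  · by_cases h2 : U 0 = V 0
    · have h3 : V 0 = T 0 := (h1.trans h2).symm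
      unfold c3
      rw [hwAt_head_eq h1, hwAt_head_eq h2, hwAt_head_eq h3]
    · exact c3_hwAt_pair h1 (fun e => h2 (h1.symm.trans e))
  · by_cases h2 : U 0 = V 0
    · rw [c3_rot, c3_rot (lt := hwLT bar)]
      exact c3_hwAt_pair h2 (fun e => h1 e.symm)
    · by_cases h3 : V 0 = T 0
      · rw [← c3_rot, ← c3_rot (lt := hwLT bar)]
        exact c3_hwAt_pair h3 (fun e => h2 e.symm)
      · unfold c3
        rw [hwAt_head_ne h1, hwAt_head_ne h2, hwAt_head_ne h3,
          hwLT_head_ne h1, hwLT_head_ne h2, hwLT_head_ne h3]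
        have := c3_cycLT y (T 0) (U 0) (V 0)
        unfold c3 at this
        simpa using this

def Red (bar : α → α) (T : ℕ → α) : Prop := ∀ n, T (n + 1) ≠ bar (T n)

def phi (bar : α → α) (x : α) (T : ℕ → α) : ℕ → α :=
  if T 0 = bar x then tl T else cns x T

theorem hwLT_cns {x : α} {T U : ℕ → α} :
    hwLT bar (cns x T) (cns x U) ↔ hwAt bar (bar x) T U :=
  hwLT_strip rfl

theorem lt_iff_not_lt_of_ne {a b : α} (h : a ≠ b) : a < b ↔ ¬ b < a :=
  ⟨fun h1 h2 => lt_asymm h1 h2, fun h1 => h.lt_or_gt.resolve_right h1⟩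

theorem xor_maj2 {P r r' : Prop} (h : r' ↔ ¬ r) :
    ((r ∧ P) ∨ (P ∧ r') ∨ (r' ∧ r)) ↔ P := by tauto

theorem xor_maj3 {q s s' : Prop} (h : s' ↔ ¬ s) :
    ((q ∧ s) ∨ (s ∧ s') ∨ (s' ∧ q)) ↔ q := by tauto

theorem or_rot {A B C : Prop} : A ∨ B ∨ C ↔ C ∨ A ∨ B := by tauto

/-- the key formula: position of the pair (U,V) relative to a cut at `y`. -/
theorem hwAt_iff_fmla {y : α} {U V : ℕ → α} (hU : U 0 ≠ y) (hV : V 0 ≠ y) :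
    ((y < U 0 ∧ hwLT bar U V) ∨ (hwLT bar U V ∧ V 0 < y) ∨ (V 0 < y ∧ y < U 0)) ↔
      hwAt bar y U V := by
  by_cases h : U 0 = V 0
  · rw [hwAt_head_eq h]
    have hx : V 0 < y ↔ ¬ y < U 0 := by
      rw [← h]
      exact lt_iff_not_lt_of_ne hU
    exact xor_maj2 hx
  · rw [hwAt_head_ne h, hwLT_head_ne h, cycLT_iff_c3 hU hV]

section Phi
variable (hbar : ∀ y : α, bar (bar y) = y) {x : α} {T U V : ℕ → α}

theorem phiA : c3 (hwLT bar) (cns x T) (cns x U) (cns x V) ↔ c3 (hwLT bar) T U V := by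
  have h := c3_hwAt (bar := bar) (bar x) T U V
  unfold c3 at h ⊢
  rw [hwLT_cns, hwLT_cns, hwLT_cns]
  exact h

include hbar in
theorem phiB (hT : T 0 = bar x) (hU : U 0 = bar x) (hV : V 0 = bar x) :
    c3 (hwLT bar) (tl T) (tl U) (tl V) ↔ c3 (hwLT bar) T U V := by
  have eT : bar (T 0) = x := by rw [hT, hbar]
  have eU : bar (U 0) = x := by rw [hU, hbar]
  have eV : bar (V 0) = x := by rw [hV, hbar]
  have h := c3_hwAt (bar := bar) x (tl T) (tl U) (tl V)
  unfold c3 at h ⊢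
  rw [hwLT_strip (hT.trans hU.symm), eT, hwLT_strip (hU.trans hV.symm), eU,
    hwLT_strip (hV.trans hT.symm), eV]
  exact h.symm

include hbar in
theorem phiC (hT : T 0 = bar x) (hU : U 0 ≠ bar x) (hV : V 0 ≠ bar x) (hRT : Red bar T) :
    c3 (hwLT bar) (tl T) (cns x U) (cns x V) ↔ c3 (hwLT bar) T U V := by
  have hT1 : T 1 ≠ x := by
    have h0 := hRT 0
    rwa [hT, hbar] at h0
  have A1 : hwLT bar (tl T) (cns x U) ↔ T 1 < x :=
    hwLT_head_ne (show (tl T) 0 ≠ (cns x U) 0 from hT1)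
  have A3 : hwLT bar (cns x V) (tl T) ↔ x < T 1 :=
    hwLT_head_ne (show (cns x V) 0 ≠ (tl T) 0 from fun e => hT1 e.symm)
  have B1 : hwLT bar T U ↔ bar x < U 0 := by
    rw [hwLT_head_ne (show T 0 ≠ U 0 from by rw [hT]; exact fun e => hU e.symm), hT]
  have B3 : hwLT bar V T ↔ V 0 < bar x := by
    rw [hwLT_head_ne (show V 0 ≠ T 0 from fun e => hV (e.trans hT)), hT]
  unfold c3
  rw [A1, A3, B1, B3, hwLT_cns]
  have hx : x < T 1 ↔ ¬ T 1 < x := lt_iff_not_lt_of_ne (fun e => hT1 e.symm)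
  exact (xor_maj2 hx).trans (hwAt_iff_fmla hU hV).symm

include hbar in
theorem phiD (hT : T 0 = bar x) (hU : U 0 = bar x) (hV : V 0 ≠ bar x)
    (hRT : Red bar T) (hRU : Red bar U) :
    c3 (hwLT bar) (tl T) (tl U) (cns x V) ↔ c3 (hwLT bar) T U V := by
  have hT1 : T 1 ≠ x := by
    have h0 := hRT 0
    rwa [hT, hbar] at h0
  have hU1 : U 1 ≠ x := by
    have h0 := hRU 0
    rwa [hU, hbar] at h0
  have A2 : hwLT bar (tl U) (cns x V) ↔ U 1 < x :=
    hwLT_head_ne (show (tl U) 0 ≠ (cns x V) 0 from hU1)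
  have A3 : hwLT bar (cns x V) (tl T) ↔ x < T 1 :=
    hwLT_head_ne (show (cns x V) 0 ≠ (tl T) 0 from fun e => hT1 e.symm)
  have B1 : hwLT bar T U ↔ hwAt bar x (tl T) (tl U) := by
    rw [hwLT_strip (hT.trans hU.symm)]
    rw [show bar (T 0) = x from by rw [hT, hbar]]
  have B2 : hwLT bar U V ↔ bar x < V 0 := by
    rw [hwLT_head_ne (show U 0 ≠ V 0 from by rw [hU]; exact fun e => hV e.symm), hU]
  have B3 : hwLT bar V T ↔ V 0 < bar x := by
    rw [hwLT_head_ne (show V 0 ≠ T 0 from fun e => hV (e.trans hT)), hT]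
  have hs : V 0 < bar x ↔ ¬ bar x < V 0 := lt_iff_not_lt_of_ne hV
  have hfm := hwAt_iff_fmla (bar := bar) (y := x) (U := tl T) (V := tl U) hT1 hU1
  unfold c3
  rw [A2, A3, B1, B2, B3]
  exact (or_rot.trans hfm).trans (xor_maj3 hs).symm

theorem c3_rot2 {β : Type*} {lt : β → β → Prop} {a b c : β} :
    c3 lt a b c ↔ c3 lt c a b := c3_rot.trans c3_rot

include hbar in
theorem c3_phi (hRT : Red bar T) (hRU : Red bar U) (hRV : Red bar V) :
    c3 (hwLT bar) (phi bar x T) (phi bar x U) (phi bar x V) ↔ c3 (hwLT bar) T U V := by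
  unfold phi
  by_cases hT : T 0 = bar x <;> by_cases hU : U 0 = bar x <;> by_cases hV : V 0 = bar x
  · rw [if_pos hT, if_pos hU, if_pos hV]
    exact phiB hbar hT hU hV
  · rw [if_pos hT, if_pos hU, if_neg hV]
    exact phiD hbar hT hU hV hRT hRU
  · rw [if_pos hT, if_neg hU, if_pos hV]
    exact (c3_rot2.trans (phiD hbar hV hT hU hRV hRT)).trans c3_rot
  · rw [if_pos hT, if_neg hU, if_neg hV]
    exact phiC hbar hT hU hV hRT
  · rw [if_neg hT, if_pos hU, if_pos hV]
    exact (c3_rot.trans (phiD hbar hU hV hT hRU hRV)).trans c3_rot2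
  · rw [if_neg hT, if_pos hU, if_neg hV]
    exact (c3_rot.trans (phiC hbar hU hV hT hRU)).trans c3_rot2
  · rw [if_neg hT, if_neg hU, if_pos hV]
    exact (c3_rot2.trans (phiC hbar hV hT hU hRV)).trans c3_rot
  · rw [if_neg hT, if_neg hU, if_neg hV]
    exact phiA

end Phi

theorem cycOrd4_iff_c3 {β : Type*} {lt : β → β → Prop}
    (hasym : ∀ a b, lt a b → ¬ lt b a) (htrans : ∀ a b c, lt a b → lt b c → lt a c)
    {a b c d : β} :
    CycOrd4 lt a b c d ↔ (c3 lt a b c ∧ c3 lt a c d) ∨ (c3 lt a c b ∧ c3 lt a d c) := by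
  unfold CycOrd4 LinOrd4 c3
  constructor
  · rintro ((⟨h1, h2, h3⟩ | ⟨h1, h2, h3⟩) | (⟨h1, h2, h3⟩ | ⟨h1, h2, h3⟩) |
      (⟨h1, h2, h3⟩ | ⟨h1, h2, h3⟩) | (⟨h1, h2, h3⟩ | ⟨h1, h2, h3⟩))
    · exact Or.inl ⟨Or.inl ⟨h1, h2⟩, Or.inl ⟨htrans _ _ _ h1 h2, h3⟩⟩
    · exact Or.inr ⟨Or.inr (Or.inl ⟨h2, h3⟩), Or.inr (Or.inl ⟨h1, htrans _ _ _ h2 h3⟩)⟩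
    · exact Or.inl ⟨Or.inr (Or.inl ⟨h1, htrans _ _ _ h2 h3⟩), Or.inr (Or.inl ⟨h2, h3⟩)⟩
    · exact Or.inr ⟨Or.inl ⟨htrans _ _ _ h1 h2, h3⟩, Or.inl ⟨h1, h2⟩⟩
    · exact Or.inl ⟨Or.inr (Or.inr ⟨htrans _ _ _ h1 h2, h3⟩), Or.inr (Or.inl ⟨h1, h2⟩)⟩
    · exact Or.inr ⟨Or.inr (Or.inr ⟨h1, htrans _ _ _ h2 h3⟩), Or.inl ⟨h2, h3⟩⟩
    · exact Or.inl ⟨Or.inl ⟨h2, h3⟩, Or.inr (Or.inr ⟨h1, htrans _ _ _ h2 h3⟩)⟩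
    · exact Or.inr ⟨Or.inr (Or.inl ⟨h1, h2⟩), Or.inr (Or.inr ⟨htrans _ _ _ h1 h2, h3⟩)⟩
  · rintro (⟨hA, hB⟩ | ⟨hA, hB⟩) <;>
      rcases hA with ⟨h1, h2⟩ | ⟨h1, h2⟩ | ⟨h1, h2⟩ <;>
      rcases hB with ⟨h3, h4⟩ | ⟨h3, h4⟩ | ⟨h3, h4⟩
    · exact Or.inl (Or.inl ⟨h1, h2, h4⟩)
    · exact absurd h4 (hasym _ _ (htrans _ _ _ (htrans _ _ _ h1 h2) h3))
    · exact Or.inr (Or.inr (Or.inr (Or.inl ⟨h3, h1, h2⟩)))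
    · exact absurd h3 (hasym _ _ h2)
    · exact Or.inr (Or.inl (Or.inl ⟨h1, h3, h4⟩))
    · exact absurd h4 (hasym _ _ h2)
    · exact absurd h3 (hasym _ _ h1)
    · exact Or.inr (Or.inr (Or.inl (Or.inl ⟨h3, h4, h2⟩)))
    · exact absurd h4 (hasym _ _ h1)
    · exact Or.inr (Or.inl (Or.inr ⟨h3, h4, h2⟩))
    · exact absurd h4 (hasym _ _ h1)
    · exact absurd h3 (hasym _ _ h1)
    · exact Or.inl (Or.inr ⟨h4, h1, h2⟩)
    · exact Or.inl (Or.inr ⟨h3, h1, h2⟩)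
    · exact Or.inr (Or.inr (Or.inr (Or.inr ⟨h1, h2, h4⟩)))
    · exact Or.inr (Or.inr (Or.inl (Or.inr ⟨h1, h3, h4⟩)))
    · exact absurd h4 (hasym _ _ h2)
    · exact absurd h3 (hasym _ _ h2)

theorem cycOrd4_phi (hbar : ∀ y : α, bar (bar y) = y) {x : α} {T U V W : ℕ → α}
    (hRT : Red bar T) (hRU : Red bar U) (hRV : Red bar V) (hRW : Red bar W) :
    CycOrd4 (hwLT bar) (phi bar x T) (phi bar x U) (phi bar x V) (phi bar x W) ↔
      CycOrd4 (hwLT bar) T U V W := by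
  have hasym : ∀ A B : ℕ → α, hwLT bar A B → ¬ hwLT bar B A :=
    fun A B h1 h2 => hwLT_asymm h1 h2
  have htrans : ∀ A B C : ℕ → α, hwLT bar A B → hwLT bar B C → hwLT bar A C :=
    fun A B C => hwLT_trans
  rw [cycOrd4_iff_c3 hasym htrans, cycOrd4_iff_c3 hasym htrans,
    c3_phi hbar hRT hRU hRV, c3_phi hbar hRT hRV hRW,
    c3_phi hbar hRT hRV hRU, c3_phi hbar hRT hRW hRV]

theorem natCast_succ' {n : ℕ} (t : ℕ) : ((t + 1 : ℕ) : ZMod n) = (t : ZMod n) + 1 := by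
  push_cast
  ring

theorem letterZ_succ_ne {V : List α} (hV : CyclicallyReduced bar V) (k : ZMod V.length) :
    letterZ V (k + 1) ≠ bar (letterZ V k) := by
  obtain ⟨hne, hfr, hcyc⟩ := hV
  have hn : 0 < V.length := List.length_pos_iff.mpr hne
  haveI : NeZero V.length := ⟨hn.ne'⟩
  rcases Nat.lt_or_ge 1 V.length with h2 | h2
  · haveI : Fact (1 < V.length) := ⟨h2⟩
    have hadd : (k + 1).val = (k.val + 1) % V.length := by
      rw [ZMod.val_add, ZMod.val_one]
    by_cases h3 : k.val + 1 < V.length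
    · unfold letterZ
      rw [hadd, Nat.mod_eq_of_lt h3]
      exact hfr k.val h3
    · have hval := ZMod.val_lt k
      have hk1 : k.val + 1 = V.length := by omega
      have h0 : (k + 1).val = 0 := by rw [hadd, hk1, Nat.mod_self]
      have hk : k.val = V.length - 1 := by omega
      unfold letterZ
      rw [h0, hk]
      exact hcyc
  · have h1 : V.length = 1 := by omega
    have hv : ∀ m : ZMod V.length, m.val = 0 := fun m => by
      have := ZMod.val_lt m
      omega
    unfold letterZ
    rw [hv (k + 1), hv k]
    have h0 : V.length - 1 = 0 := by omega
    rw [h0] at hcyc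
    exact hcyc

theorem red_fwd {V : List α} (hV : CyclicallyReduced bar V) (i : ZMod V.length) :
    Red bar (fwd V i) := by
  intro t
  show letterZ V (i + ((t + 1 : ℕ) : ZMod V.length)) ≠ bar (letterZ V (i + t))
  rw [natCast_succ', ← add_assoc]
  exact letterZ_succ_ne hV (i + t)

theorem red_bwd (hbar : ∀ y : α, bar (bar y) = y) {V : List α}
    (hV : CyclicallyReduced bar V) (i : ZMod V.length) :
    Red bar (bwd bar V i) := by
  intro t
  show bar (letterZ V (i - 1 - ((t + 1 : ℕ) : ZMod V.length))) ≠
    bar (bar (letterZ V (i - 1 - (t : ZMod V.length))))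
  rw [hbar, natCast_succ']
  intro he
  have h2 := letterZ_succ_ne hV (i - 1 - ((t : ZMod V.length) + 1))
  rw [show (i - 1 - ((t : ZMod V.length) + 1)) + 1 = i - 1 - (t : ZMod V.length) from by ring]
    at h2
  exact h2 he.symm

theorem sgn_phi_aux (hbar : ∀ y : α, bar (bar y) = y) {V W : List α}
    (hV : CyclicallyReduced bar V) (hW : CyclicallyReduced bar W)
    {i i' : ZMod V.length} {j j' : ZMod W.length} {x : α}
    (e1 : fwd V i' = phi bar x (fwd V i)) (e2 : fwd W j' = phi bar x (fwd W j))
    (e3 : bwd bar V i' = phi bar x (bwd bar V i))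
    (e4 : bwd bar W j' = phi bar x (bwd bar W j)) :
    sgn bar V W i' j' = sgn bar V W i j := by
  have RT := red_fwd hV i
  have RU := red_fwd hW j
  have RV := red_bwd hbar hV i
  have RW := red_bwd hbar hW j
  classical
  unfold sgn
  rw [e1, e2, e3, e4]
  rw [if_congr (cycOrd4_phi hbar RT RU RV RW) rfl
    (if_congr (cycOrd4_phi hbar RT RW RV RU) rfl rfl)]

theorem rule1_sgn (hbar : ∀ y : α, bar (bar y) = y) {V W : List α}
    (hV : CyclicallyReduced bar V) (hW : CyclicallyReduced bar W)
    {i : ZMod V.length} {j : ZMod W.length} (hl : letterZ V i = letterZ W j) :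
    sgn bar V W (i + 1) (j + 1) = sgn bar V W i j := by
  refine sgn_phi_aux hbar hV hW (x := bar (letterZ V i)) ?_ ?_ ?_ ?_
  · funext t
    rw [phi, if_pos]
    · show letterZ V ((i + 1) + (t : ZMod V.length)) =
        letterZ V (i + ((t + 1 : ℕ) : ZMod V.length))
      rw [natCast_succ']
      congr 1
      ring
    · show letterZ V (i + ((0 : ℕ) : ZMod V.length)) = bar (bar (letterZ V i))
      rw [hbar]
      simp
  · funext t
    rw [phi, if_pos]
    · show letterZ W ((j + 1) + (t : ZMod W.length)) =
        letterZ W (j + ((t + 1 : ℕ) : ZMod W.length))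
      rw [natCast_succ']
      congr 1
      ring
    · show letterZ W (j + ((0 : ℕ) : ZMod W.length)) = bar (bar (letterZ V i))
      rw [hbar, hl]
      simp
  · funext t
    rw [phi, if_neg]
    · cases t with
      | zero =>
        show bar (letterZ V ((i + 1) - 1 - ((0 : ℕ) : ZMod V.length))) = bar (letterZ V i)
        congr 2
        simp
      | succ m =>
        show bar (letterZ V ((i + 1) - 1 - ((m + 1 : ℕ) : ZMod V.length))) =
          bar (letterZ V (i - 1 - (m : ZMod V.length)))
        rw [natCast_succ']
        congr 2
        ring
    · show ¬ bar (letterZ V (i - 1 - ((0 : ℕ) : ZMod V.length))) = bar (bar (letterZ V i))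
      rw [hbar]
      simp only [Nat.cast_zero, sub_zero]
      intro he
      have h2 := letterZ_succ_ne hV (i - 1)
      rw [sub_add_cancel] at h2
      exact h2 he.symm
  · funext t
    rw [phi, if_neg]
    · cases t with
      | zero =>
        show bar (letterZ W ((j + 1) - 1 - ((0 : ℕ) : ZMod W.length))) = bar (letterZ V i)
        rw [hl]
        congr 2
        simp
      | succ m =>
        show bar (letterZ W ((j + 1) - 1 - ((m + 1 : ℕ) : ZMod W.length))) =
          bar (letterZ W (j - 1 - (m : ZMod W.length)))
        rw [natCast_succ']
        congr 2
        ring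
    · show ¬ bar (letterZ W (j - 1 - ((0 : ℕ) : ZMod W.length))) = bar (bar (letterZ V i))
      rw [hbar, hl]
      simp only [Nat.cast_zero, sub_zero]
      intro he
      have h2 := letterZ_succ_ne hW (j - 1)
      rw [sub_add_cancel] at h2
      exact h2 he.symm

theorem rule2_sgn (hbar : ∀ y : α, bar (bar y) = y) {V W : List α}
    (hV : CyclicallyReduced bar V) (hW : CyclicallyReduced bar W)
    {i : ZMod V.length} {j : ZMod W.length}
    (hl : letterZ V (i - 1) = bar (letterZ W j)) :
    sgn bar V W (i - 1) (j + 1) = sgn bar V W i j := by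
  refine sgn_phi_aux hbar hV hW (x := letterZ V (i - 1)) ?_ ?_ ?_ ?_
  · funext t
    rw [phi, if_neg]
    · cases t with
      | zero =>
        show letterZ V ((i - 1) + ((0 : ℕ) : ZMod V.length)) = letterZ V (i - 1)
        simp
      | succ m =>
        show letterZ V ((i - 1) + ((m + 1 : ℕ) : ZMod V.length)) =
          letterZ V (i + (m : ZMod V.length))
        rw [natCast_succ']
        congr 1
        ring
    · show ¬ letterZ V (i + ((0 : ℕ) : ZMod V.length)) = bar (letterZ V (i - 1))
      simp only [Nat.cast_zero, add_zero]
      have h2 := letterZ_succ_ne hV (i - 1)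
      rw [sub_add_cancel] at h2
      exact h2
  · funext t
    rw [phi, if_pos]
    · show letterZ W ((j + 1) + (t : ZMod W.length)) =
        letterZ W (j + ((t + 1 : ℕ) : ZMod W.length))
      rw [natCast_succ']
      congr 1
      ring
    · show letterZ W (j + ((0 : ℕ) : ZMod W.length)) = bar (letterZ V (i - 1))
      rw [hl, hbar]
      simp
  · funext t
    rw [phi, if_pos]
    · show bar (letterZ V ((i - 1) - 1 - (t : ZMod V.length))) =
        bar (letterZ V (i - 1 - ((t + 1 : ℕ) : ZMod V.length)))
      rw [natCast_succ']
      congr 2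
      ring
    · show bar (letterZ V (i - 1 - ((0 : ℕ) : ZMod V.length))) = bar (letterZ V (i - 1))
      simp
  · funext t
    rw [phi, if_neg]
    · cases t with
      | zero =>
        show bar (letterZ W ((j + 1) - 1 - ((0 : ℕ) : ZMod W.length))) = letterZ V (i - 1)
        rw [hl]
        congr 2
        simp
      | succ m =>
        show bar (letterZ W ((j + 1) - 1 - ((m + 1 : ℕ) : ZMod W.length))) =
          bar (letterZ W (j - 1 - (m : ZMod W.length)))
        rw [natCast_succ']
        congr 2
        ring
    · show ¬ bar (letterZ W (j - 1 - ((0 : ℕ) : ZMod W.length))) = bar (letterZ V (i - 1))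
      rw [hl, hbar]
      simp only [Nat.cast_zero, sub_zero]
      intro he
      have h2 := letterZ_succ_ne hW (j - 1)
      rw [sub_add_cancel] at h2
      exact h2 he.symm

theorem step_sgn (hbar : ∀ y : α, bar (bar y) = y) {V W : List α}
    (hV : CyclicallyReduced bar V) (hW : CyclicallyReduced bar W)
    {p q : ZMod V.length × ZMod W.length} (hs : Step bar V W p q) :
    sgn bar V W p.1 p.2 = sgn bar V W q.1 q.2 := by
  rcases hs with ⟨hq, hl⟩ | ⟨hq, hl⟩
  · subst hq
    exact (rule1_sgn hbar hV hW hl).symm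
  · subst hq
    exact (rule2_sgn hbar hV hW hl).symm
end Aux

/-- the sign function `s_(V,W)` is constant on `R(V,W)`-equivalence classes. -/
theorem statement9 [LinearOrder α] (bar : α → α) (hbar : ∀ x, bar (bar x) = x) (hbarne : ∀ x, bar x ≠ x)
    (V W : List α) (hV : CyclicallyReduced bar V) (hW : CyclicallyReduced bar W)
    (i k : ZMod V.length) (j h : ZMod W.length)
    (heq : REq bar V W (i, j) (k, h)) :
    sgn bar V W i j = sgn bar V W k h := by
  have hmain : ∀ p q : ZMod V.length × ZMod W.length, REq bar V W p q →
      sgn bar V W p.1 p.2 = sgn bar V W q.1 q.2 := by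
    intro p q hpq
    induction hpq with
    | rel a b hs => exact step_sgn hbar hV hW hs
    | refl a => rfl
    | symm a b _ ih => exact ih.symm
    | trans a b c _ _ ih1 ih2 => exact ih1.trans ih2
  exact hmain (i, j) (k, h) heq

end GoldmanPaper
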